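/- Let a_i > 0, T_i > 0 for i = 1..N, and define S(λ) = ∑_i max(0, P_i(λ)) where P_i(λ) = (2/(λc²))·W₀((λc²/(2a_i))·2^{T_i}) − 1/a_i and c = ln 2. If 0 < P_tot < ∑_i (2^{T_i} − 1)/a_i, then there exists a unique λ* > 0 with S(λ*) = P_tot. -/

import Mathlib

open Real Finset

/-- The principal branch of the Lambert W function.  For `z ≥ 0` the equation
`w * exp w = z` has a unique real solution, which is nonnegative, so
`Function.invFun` yields exactly the principal branch `W₀` there. -/
noncomputable def W0 (z : ℝ) : ℝ := Function.invFun (fun w : ℝ => w * Real.exp w) z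

/-!
On `[0, ∞)` the principal branch `W₀` is the inverse of the increasing homeomorphism
`w ↦ w * exp w`, and `W₀ z / z = exp (-W₀ z)`. Hence the `i`-th water-filling term equals
`2 ^ T i / a i * exp (-W₀ (κᵢ λ)) - 1 / a i` with `κᵢ > 0`, a function that is continuous on
`[0, ∞)`, strictly decreasing, equal to `(2 ^ T i - 1) / a i` at `λ = 0` and to `0` at
`λ = 2 a i T i / log 2`. A finite sum of the positive parts of such functions is continuous and
strictly decreasing wherever it is positive, so by the intermediate value theorem it takes every
value strictly between `0` and its value at `0` exactly once.
-/

/-- `w ↦ w * exp w` on `[0, ∞)`, continued by the identity on `(-∞, 0]`, so that it becomes an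
order automorphism of `ℝ`. -/
noncomputable def mulExpExt (w : ℝ) : ℝ := max w 0 * exp (max w 0) + min w 0

lemma mulExpExt_of_nonneg {w : ℝ} (h : 0 ≤ w) : mulExpExt w = w * exp w := by
  simp [mulExpExt, h]

lemma mulExpExt_of_nonpos {w : ℝ} (h : w ≤ 0) : mulExpExt w = w := by
  simp [mulExpExt, h]

lemma le_mulExpExt (w : ℝ) : w ≤ mulExpExt w := by
  rcases le_total 0 w with h | h
  · rw [mulExpExt_of_nonneg h]
    exact le_mul_of_one_le_right h (one_le_exp h)
  · rw [mulExpExt_of_nonpos h]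

lemma strictMono_mulExpExt : StrictMono mulExpExt := by
  intro x y hxy
  rcases le_or_gt 0 x with hx | hx
  · rw [mulExpExt_of_nonneg hx, mulExpExt_of_nonneg (hx.trans hxy.le)]
    exact mul_lt_mul hxy (exp_le_exp.2 hxy.le) (exp_pos x) (hx.trans hxy.le)
  · rw [mulExpExt_of_nonpos hx.le]
    exact hxy.trans_le (le_mulExpExt y)

lemma continuous_mulExpExt : Continuous mulExpExt := by
  unfold mulExpExt; fun_prop

lemma surjective_mulExpExt : Function.Surjective mulExpExt :=
  continuous_mulExpExt.surjective (Filter.tendsto_atTop_mono le_mulExpExt Filter.tendsto_id)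
    (Filter.tendsto_id.congr' <| Filter.eventuallyEq_of_mem (Filter.Iic_mem_atBot 0)
      fun _ hw => (mulExpExt_of_nonpos hw).symm)

noncomputable def mulExpOrderIso : ℝ ≃o ℝ :=
  StrictMono.orderIsoOfSurjective mulExpExt strictMono_mulExpExt surjective_mulExpExt

lemma W0_mul_exp_self {z : ℝ} (hz : 0 ≤ z) : W0 z * exp (W0 z) = z := by
  obtain ⟨w, hw⟩ := surjective_mulExpExt z
  have hw0 : 0 ≤ w := by
    by_contra! h
    rw [mulExpExt_of_nonpos h.le] at hw
    linarith
  exact Function.invFun_eq (f := fun w : ℝ => w * exp w) ⟨w, (mulExpExt_of_nonneg hw0).symm.trans hw⟩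

lemma W0_nonneg {z : ℝ} (hz : 0 ≤ z) : 0 ≤ W0 z := by
  by_contra! h
  nlinarith [W0_mul_exp_self hz, exp_pos (W0 z)]

lemma W0_eq_mulExpOrderIso_symm {z : ℝ} (hz : 0 ≤ z) : W0 z = mulExpOrderIso.symm z := by
  rw [OrderIso.eq_symm_apply]
  exact (mulExpExt_of_nonneg (W0_nonneg hz)).trans (W0_mul_exp_self hz)

lemma W0_mul_exp {w : ℝ} (hw : 0 ≤ w) : W0 (w * exp w) = w := by
  rw [W0_eq_mulExpOrderIso_symm (by positivity), ← mulExpExt_of_nonneg hw]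
  exact mulExpOrderIso.symm_apply_apply w

lemma W0_zero : W0 0 = 0 := by
  simpa using W0_mul_exp le_rfl

lemma W0_div_self {z : ℝ} (hz : 0 < z) : W0 z / z = exp (-W0 z) := by
  rw [div_eq_iff hz.ne', exp_neg]
  field_simp
  exact W0_mul_exp_self hz.le

lemma strictMonoOn_W0 : StrictMonoOn W0 (Set.Ici 0) := fun x hx y hy hxy => by
  rw [W0_eq_mulExpOrderIso_symm hx, W0_eq_mulExpOrderIso_symm hy]
  exact mulExpOrderIso.symm.strictMono hxy

lemma continuousOn_W0 : ContinuousOn W0 (Set.Ici 0) :=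
  mulExpOrderIso.symm.continuous.continuousOn.congr fun _ hz => W0_eq_mulExpOrderIso_symm hz

section ClampedSum

variable {ι : Type*} [Fintype ι] {F : ι → ℝ → ℝ}

lemma sum_max_zero_lt_of_lt (hF : ∀ i, StrictAntiOn (F i) (Set.Ici 0)) {x y : ℝ}
    (hx : 0 ≤ x) (hxy : x < y) (hpos : 0 < ∑ i, max 0 (F i y)) :
    ∑ i, max 0 (F i y) < ∑ i, max 0 (F i x) := by
  have hy : y ∈ Set.Ici 0 := hx.trans hxy.le
  obtain ⟨i, -, hi⟩ := exists_lt_of_sum_lt (show ∑ _ : ι, (0 : ℝ) < _ by simpa using hpos)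
  have hi : 0 < F i y := by simpa using hi
  refine sum_lt_sum (fun j _ => max_le_max le_rfl ((hF j).antitoneOn hx hy hxy.le))
    ⟨i, mem_univ i, ?_⟩
  rw [max_eq_right hi.le]
  exact (hF i hx hy hxy).trans_le (le_max_right 0 _)

theorem existsUnique_pos_sum_max_zero_eq (hcont : ∀ i, ContinuousOn (F i) (Set.Ici 0))
    (hanti : ∀ i, StrictAntiOn (F i) (Set.Ici 0)) (hvanish : ∀ i, ∃ L, 0 ≤ L ∧ F i L ≤ 0)
    {y : ℝ} (hy : 0 < y) (hy0 : y < ∑ i, max 0 (F i 0)) :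
    ∃! lam, 0 < lam ∧ ∑ i, max 0 (F i lam) = y := by
  choose L hL0 hL using hvanish
  obtain ⟨M, hM⟩ := Finite.exists_le L
  have hzero : ∑ i, max 0 (F i (max 0 M)) = 0 := sum_eq_zero fun i _ =>
    max_eq_left <| ((hanti i).antitoneOn (hL0 i) (le_max_left 0 M)
      ((hM i).trans (le_max_right 0 M))).trans (hL i)
  have hcont_sum : ContinuousOn (fun lam => ∑ i, max 0 (F i lam)) (Set.Icc 0 (max 0 M)) :=
    continuousOn_finsetSum _ fun i _ =>
      continuousOn_const.sup ((hcont i).mono Set.Icc_subset_Ici_self)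
  obtain ⟨lam, hlam, hlamy⟩ :=
    intermediate_value_Icc' (le_max_left 0 M) hcont_sum ⟨hzero.symm ▸ hy.le, hy0.le⟩
  simp only at hlamy
  have hlam0 : 0 < lam := hlam.1.lt_of_ne fun h => by subst h; exact hy0.ne' hlamy
  refine ⟨lam, ⟨hlam0, hlamy⟩, fun mu ⟨hmu0, hmuy⟩ => ?_⟩
  by_contra hne
  rcases lt_or_gt_of_ne hne with h | h
  · exact (sum_max_zero_lt_of_lt hanti hmu0.le h (hlamy ▸ hy)).ne (hlamy.trans hmuy.symm)
  · exact (sum_max_zero_lt_of_lt hanti hlam0.le h (hmuy ▸ hy)).ne (hmuy.trans hlamy.symm)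

end ClampedSum

noncomputable def waterFillTerm (a T lam : ℝ) : ℝ :=
  2 ^ T / a * exp (-W0 (lam * log 2 ^ 2 / (2 * a) * 2 ^ T)) - 1 / a

section WaterFillTerm

variable {a T : ℝ}

lemma waterFillTerm_eq (ha : 0 < a) {lam : ℝ} (hlam : 0 < lam) :
    2 / (lam * log 2 ^ 2) * W0 (lam * log 2 ^ 2 / (2 * a) * 2 ^ T) - 1 / a =
      waterFillTerm a T lam := by
  have hz : 0 < lam * log 2 ^ 2 / (2 * a) * 2 ^ T := by positivity
  rw [waterFillTerm, ← W0_div_self hz]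
  field_simp

lemma waterFillTerm_zero : waterFillTerm a T 0 = (2 ^ T - 1) / a := by
  simp [waterFillTerm, W0_zero, sub_div]

lemma waterFillTerm_eq_zero (ha : 0 < a) (hT : 0 ≤ T) :
    waterFillTerm a T (2 * a * T / log 2) = 0 := by
  have harg : 2 * a * T / log 2 * log 2 ^ 2 / (2 * a) * 2 ^ T = T * log 2 * exp (T * log 2) := by
    rw [mul_comm T, ← rpow_def_of_pos two_pos]
    field_simp
  rw [waterFillTerm, harg, W0_mul_exp (by positivity), exp_neg, mul_comm T,
    ← rpow_def_of_pos two_pos]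
  field_simp
  ring

lemma strictAntiOn_waterFillTerm (ha : 0 < a) : StrictAntiOn (waterFillTerm a T) (Set.Ici 0) := by
  have hκ : 0 < log 2 ^ 2 / (2 * a) * 2 ^ T := by positivity
  intro x hx y hy hxy
  have hW : W0 (x * log 2 ^ 2 / (2 * a) * 2 ^ T) < W0 (y * log 2 ^ 2 / (2 * a) * 2 ^ T) := by
    simp only [mul_div_assoc, mul_assoc]
    exact strictMonoOn_W0 (mul_nonneg hx hκ.le) (mul_nonneg hy hκ.le)
      (mul_lt_mul_of_pos_right hxy hκ)
  unfold waterFillTerm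
  gcongr

lemma continuousOn_waterFillTerm (ha : 0 < a) : ContinuousOn (waterFillTerm a T) (Set.Ici 0) := by
  have hW : ContinuousOn (fun lam => W0 (lam * log 2 ^ 2 / (2 * a) * 2 ^ T)) (Set.Ici 0) :=
    continuousOn_W0.comp (by fun_prop) fun lam (hlam : 0 ≤ lam) => Set.mem_Ici.2 (by positivity)
  unfold waterFillTerm
  fun_prop

end WaterFillTerm

theorem dual_root_exists_unique (N : ℕ) (a T : Fin N → ℝ)
    (ha : ∀ i, 0 < a i) (hT : ∀ i, 0 < T i)
    (Ptot : ℝ) (hPtot : 0 < Ptot)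
    (hins : Ptot < ∑ i, (2 ^ T i - 1) / a i) :
    let c : ℝ := Real.log 2
    let S : ℝ → ℝ := fun lam =>
      ∑ i, max 0 (2 / (lam * c ^ 2) * W0 (lam * c ^ 2 / (2 * a i) * 2 ^ T i) - 1 / a i)
    ∃! lam : ℝ, 0 < lam ∧ S lam = Ptot := by
  intro c S
  have hS : ∀ lam, 0 < lam → S lam = ∑ i, max 0 (waterFillTerm (a i) (T i) lam) :=
    fun lam hlam => sum_congr rfl fun i _ => by rw [waterFillTerm_eq (ha i) hlam]
  have hsum0 : ∑ i, max 0 (waterFillTerm (a i) (T i) 0) = ∑ i, (2 ^ T i - 1) / a i := by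
    refine sum_congr rfl fun i _ => ?_
    rw [waterFillTerm_zero, max_eq_right]
    have := one_lt_rpow one_lt_two (hT i)
    exact div_nonneg (by linarith) (ha i).le
  obtain ⟨lam, ⟨hlam0, hlam⟩, huniq⟩ := existsUnique_pos_sum_max_zero_eq
    (fun i => continuousOn_waterFillTerm (ha i))
    (fun i => strictAntiOn_waterFillTerm (ha i))
    (fun i => ⟨_, by have := ha i; have := hT i; positivity,
      (waterFillTerm_eq_zero (ha i) (hT i).le).le⟩)
    hPtot (hsum0 ▸ hins)
  exact ⟨lam, ⟨hlam0, (hS lam hlam0).trans hlam⟩,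
    fun mu ⟨hmu0, hmu⟩ => huniq mu ⟨hmu0, (hS mu hmu0).symm.trans hmu⟩⟩
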